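/- arXiv:hep-th/9910215 — 4 statements merged into one kernel-verified Lean document; each statement's English description precedes it below -/
import Mathlib

section
/- Suppose functions T^{(1)}_ℓ and T^{(a)}_1 (with T^{(0)}_1 = 1, T^{(1)}_0 = 1, T^{(1)}_{ℓ<0} = 0, T^{(a)}_1 = 0 for a < 0 or a > n+1) satisfy the determinant relation T^{(1)}_{ℓ+1}(λ) = det( T^{(1-i+j)}_1(λ q^{(ℓ+2-i-j)/2}) )_{1≤i,j≤ℓ+1} for all ℓ ≥ 0. Then conversely, for 1 ≤ a ≤ n+1, T^{(a)}_1(λ) = det( T^{(1)}_{1-i+j}(λ q^{(i+j-a-1)/2}) )_{1≤i,j≤a}. -/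
/-!
The Jacobi–Trudi matrix is upper Hessenberg with unit subdiagonal (because `T⁽⁰⁾₁ = 1` and
`T⁽ᵃ⁾₁ = 0` for `a < 0`), so expanding it along its last column shows that, given `T⁽¹⁾₀ = 1`,
the Jacobi–Trudi formula for all `ℓ` is equivalent to the vanishing for `N ≥ 1` of the twisted
convolutions `∑_{i+j=N} (-1)ʲ T⁽ʲ⁾₁(λ s⁻ⁱ) T⁽¹⁾ᵢ(λ sʲ)`. Exchanging the two families and
replacing `s` by `s⁻¹` only multiplies this sum by `(-1)ᴺ`, so the same equivalence, applied
to the exchanged families, yields the dual formula.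
-/

open Finset

namespace Matrix

variable {R : Type*} [CommRing R] {l : ℕ}

theorem det_submatrix_succAbove_castSucc_of_hessenberg (M : Matrix (Fin (l + 1)) (Fin (l + 1)) R)
    (hsub : ∀ i : Fin l, M i.succ i.castSucc = 1)
    (hzero : ∀ i j : Fin (l + 1), (j : ℕ) + 1 < i → M i j = 0) (i : Fin (l + 1)) :
    (M.submatrix i.succAbove Fin.castSucc).det =
      (M.submatrix (Fin.castLE i.isLt.le) (Fin.castLE i.isLt.le)).det := by
  have above (ρ : Fin l) (hρ : (ρ : ℕ) < i) : i.succAbove ρ = ρ.castSucc :=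
    Fin.succAbove_of_castSucc_lt _ _ hρ
  have below (ρ : Fin l) (hρ : ¬ (ρ : ℕ) < i) : i.succAbove ρ = ρ.succ :=
    Fin.succAbove_of_le_castSucc _ _ (by rw [Fin.le_def]; simpa using hρ)
  rw [twoBlockTriangular_det _ (fun ρ : Fin l => (ρ : ℕ) < i)]
  · have hlower : ((M.submatrix i.succAbove Fin.castSucc).toSquareBlockProp
        fun ρ => ¬ (ρ : ℕ) < i).det = 1 := by
      rw [det_of_isUpperTriangular]
      · refine prod_eq_one fun ρ _ => ?_
        simp [toSquareBlockProp_def, below ρ ρ.2, hsub]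
      · intro ρ σ (hσρ : σ < ρ)
        simp only [toSquareBlockProp_def, of_apply, submatrix_apply, below ρ ρ.2]
        exact hzero _ _ (by simpa using hσρ)
    rw [hlower, mul_one, ← det_submatrix_equiv_self (Fin.castLEquiv i.is_le)]
    congr 1
    ext r c
    simp only [toSquareBlockProp_def, submatrix_apply, of_apply, Fin.castLEquiv_apply,
      above (Fin.castLE i.is_le r) r.isLt]
    rfl
  · intro ρ hρ σ hσ
    simp only [submatrix_apply, below ρ hρ]
    exact hzero _ _ (by simp only [Fin.val_castSucc, Fin.val_succ]; omega)

theorem det_eq_sum_of_hessenberg (M : Matrix (Fin (l + 1)) (Fin (l + 1)) R)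
    (hsub : ∀ i : Fin l, M i.succ i.castSucc = 1)
    (hzero : ∀ i j : Fin (l + 1), (j : ℕ) + 1 < i → M i j = 0) :
    M.det = ∑ i : Fin (l + 1), (-1) ^ (i + l : ℕ) * M i (Fin.last l) *
      (M.submatrix (Fin.castLE i.isLt.le) (Fin.castLE i.isLt.le)).det := by
  rw [det_succ_column M (Fin.last l)]
  refine sum_congr rfl fun i _ => ?_
  rw [Fin.succAbove_last, det_submatrix_succAbove_castSucc_of_hessenberg M hsub hzero,
    Fin.val_last]

end Matrix

section JacobiTrudi

variable {K : Type*} [Field K]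

def jacobiTrudiMatrix (f : ℤ → K → K) (s : K) (k : ℕ) (lam : K) : Matrix (Fin k) (Fin k) K :=
  Matrix.of fun i j => f (1 - i + j) (lam * s ^ ((k : ℤ) - 1 - i - j))

def twistedConvolution (P Q : ℤ → K → K) (s : K) (N : ℕ) (lam : K) : K :=
  ∑ p ∈ antidiagonal N, (-1) ^ p.2 * P p.2 (lam / s ^ p.1) * Q p.1 (lam * s ^ p.2)

variable {f P Q : ℤ → K → K} {s : K}

theorem jacobiTrudiMatrix_submatrix_castLE (hs : s ≠ 0) {k l : ℕ} (h : k ≤ l + 1) (lam : K) :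
    (jacobiTrudiMatrix f s (l + 1) lam).submatrix (Fin.castLE h) (Fin.castLE h) =
      jacobiTrudiMatrix f s k (lam * s ^ (l + 1 - k)) := by
  ext i j
  simp only [jacobiTrudiMatrix, Matrix.submatrix_apply, Matrix.of_apply, Fin.val_castLE, mul_assoc,
    ← zpow_natCast, ← zpow_add₀ hs]
  congr 3
  push_cast [h]
  ring

theorem det_jacobiTrudiMatrix_succ (hs : s ≠ 0) (hf0 : ∀ lam, f 0 lam = 1)
    (hfneg : ∀ a : ℤ, a < 0 → ∀ lam, f a lam = 0) (l : ℕ) (lam : K) :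
    (jacobiTrudiMatrix f s (l + 1) lam).det =
      ∑ p ∈ antidiagonal l, (-1) ^ p.2 * f (p.2 + 1 : ℕ) (lam / s ^ p.1) *
        (jacobiTrudiMatrix f s p.1 (lam * s ^ (p.2 + 1))).det := by
  rw [Matrix.det_eq_sum_of_hessenberg, Nat.sum_antidiagonal_eq_sum_range_succ (fun i j =>
    (-1) ^ j * f (j + 1 : ℕ) (lam / s ^ i) * (jacobiTrudiMatrix f s i (lam * s ^ (j + 1))).det),
    ← Fin.sum_univ_eq_sum_range]
  · refine sum_congr rfl fun i _ => ?_
    have hi : (i : ℕ) ≤ l := i.is_le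
    rw [jacobiTrudiMatrix_submatrix_castLE hs, Nat.sub_add_comm hi,
      neg_one_pow_congr (m := i + l) (n := l - i) (by rw [Nat.even_add, Nat.even_sub hi]; tauto)]
    simp only [jacobiTrudiMatrix, Matrix.of_apply, Fin.val_last]
    congr 3
    · push_cast [hi]; ring
    · rw [div_eq_mul_inv, ← zpow_natCast, ← _root_.zpow_neg]; congr 2; push_cast; ring
  · intro i
    simp [jacobiTrudiMatrix, hf0]
  · intro i j h
    exact hfneg _ (by omega) _

theorem twistedConvolution_succ (hP0 : ∀ lam, P 0 lam = 1) (l : ℕ) (lam : K) :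
    twistedConvolution P Q s (l + 1) lam = Q (l + 1 : ℕ) lam -
      ∑ p ∈ antidiagonal l, (-1) ^ p.2 * P (p.2 + 1 : ℕ) (lam / s ^ p.1) *
        Q p.1 (lam * s ^ (p.2 + 1)) := by
  simp [twistedConvolution, Nat.sum_antidiagonal_succ', hP0, pow_succ, sub_eq_add_neg]

theorem twistedConvolution_swap (N : ℕ) (lam : K) :
    twistedConvolution Q P s⁻¹ N lam = (-1) ^ N * twistedConvolution P Q s N lam := by
  rw [twistedConvolution, ← Nat.sum_antidiagonal_swap, twistedConvolution, mul_sum]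
  refine sum_congr rfl fun p hp => ?_
  rw [Finset.HasAntidiagonal.mem_antidiagonal] at hp
  have hsign : (-1 : K) ^ p.1 = (-1) ^ N * (-1) ^ p.2 := by
    rw [← pow_add, ← hp]
    exact neg_one_pow_congr (by rw [Nat.even_add, Nat.even_add]; tauto)
  simp only [Prod.fst_swap, Prod.snd_swap, inv_pow, inv_inv, hsign, div_eq_mul_inv]
  ring

theorem forall_eq_det_jacobiTrudiMatrix_iff (hs : s ≠ 0) (hP0 : ∀ lam, P 0 lam = 1)
    (hPneg : ∀ a : ℤ, a < 0 → ∀ lam, P a lam = 0) (hQ0 : ∀ lam, Q 0 lam = 1) :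
    (∀ (k : ℕ) lam, Q k lam = (jacobiTrudiMatrix P s k lam).det) ↔
      ∀ (l : ℕ) lam, twistedConvolution P Q s (l + 1) lam = 0 := by
  constructor
  · intro hQ l lam
    simp_rw [twistedConvolution_succ hP0, hQ, det_jacobiTrudiMatrix_succ hs hP0 hPneg, sub_self]
  · intro hconv k
    induction k using Nat.strong_induction_on with
    | _ k ih =>
      intro lam
      rcases k with _ | l
      · simp [jacobiTrudiMatrix, hQ0]
      · rw [sub_eq_zero.mp ((twistedConvolution_succ hP0 l lam).symm.trans (hconv l lam)),
          det_jacobiTrudiMatrix_succ hs hP0 hPneg]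
        refine sum_congr rfl fun p hp => ?_
        rw [ih p.1 (by rw [Finset.HasAntidiagonal.mem_antidiagonal] at hp; omega)]

end JacobiTrudi

theorem stmt1_general (n : ℕ) (s : ℂ) (hs : s ≠ 0)
    (T1 : ℤ → ℂ → ℂ)
    (hT10 : ∀ lam, T1 0 lam = 1)
    (hT1neg : ∀ a : ℤ, a < 0 → ∀ lam, T1 a lam = 0)
    (TL : ℤ → ℂ → ℂ)
    (hTL0 : ∀ lam, TL 0 lam = 1)
    (hTLneg : ∀ l : ℤ, l < 0 → ∀ lam, TL l lam = 0)
    (hTLdet : ∀ (l : ℕ) (lam : ℂ),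
      TL ((l : ℤ) + 1) lam =
        Matrix.det (Matrix.of fun i j : Fin (l + 1) =>
          T1 (1 - (i : ℤ) + (j : ℤ)) (lam * s ^ ((l : ℤ) - (i : ℤ) - (j : ℤ))))) :
    ∀ a : ℕ, 1 ≤ a → a ≤ n + 1 → ∀ lam : ℂ,
      T1 (a : ℤ) lam =
        Matrix.det (Matrix.of fun i j : Fin a =>
          TL (1 - (i : ℤ) + (j : ℤ)) (lam * s ^ ((i : ℤ) + (j : ℤ) + 1 - (a : ℤ)))) := by
  have hTL (k : ℕ) (lam : ℂ) : TL k lam = (jacobiTrudiMatrix T1 s k lam).det := by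
    rcases k with _ | l
    · simp [jacobiTrudiMatrix, hTL0]
    · rw [Nat.cast_succ, hTLdet]
      simp [jacobiTrudiMatrix]
  have hconv := (forall_eq_det_jacobiTrudiMatrix_iff hs hT10 hT1neg hTL0).mp hTL
  have hT1 := (forall_eq_det_jacobiTrudiMatrix_iff (inv_ne_zero hs) hTL0 hTLneg hT10).mpr
    fun l lam => by rw [twistedConvolution_swap, hconv, mul_zero]
  intro a _ _ lam
  rw [hT1]
  simp only [jacobiTrudiMatrix, _root_.inv_zpow']
  congr 3 with i j
  congr 3
  ring

/-- back-propagation dual quantum Jacobi-Trudi formula (paper eq. (qJT2)):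
if `T^{(1)}_{ℓ+1}` is given by the Jacobi-Trudi determinant in the `T^{(a)}_1`,
then conversely `T^{(a)}_1` is the dual determinant in the `T^{(1)}_ℓ`. -/
theorem stmt1 (n : ℕ) (s : ℂ) (hs : s ≠ 0)
    (T1 : ℤ → ℂ → ℂ)
    (hT10 : ∀ lam, T1 0 lam = 1)
    (hT1neg : ∀ a : ℤ, a < 0 → ∀ lam, T1 a lam = 0)
    (hT1high : ∀ a : ℤ, (n : ℤ) + 2 ≤ a → ∀ lam, T1 a lam = 0)
    (TL : ℤ → ℂ → ℂ)
    (hTL0 : ∀ lam, TL 0 lam = 1)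
    (hTLneg : ∀ l : ℤ, l < 0 → ∀ lam, TL l lam = 0)
    (hTLdet : ∀ (l : ℕ) (lam : ℂ),
      TL ((l : ℤ) + 1) lam =
        Matrix.det (Matrix.of fun i j : Fin (l + 1) =>
          T1 (1 - (i : ℤ) + (j : ℤ)) (lam * s ^ ((l : ℤ) - (i : ℤ) - (j : ℤ))))) :
    ∀ a : ℕ, 1 ≤ a → a ≤ n + 1 → ∀ lam : ℂ,
      T1 (a : ℤ) lam =
        Matrix.det (Matrix.of fun i j : Fin a =>
          TL (1 - (i : ℤ) + (j : ℤ)) (lam * s ^ ((i : ℤ) + (j : ℤ) + 1 - (a : ℤ)))) :=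
  stmt1_general n s hs T1 hT10 hT1neg TL hTL0 hTLneg hTLdet
end

section
/- Let T_μ(λ) for a Young diagram μ be defined by the quantum Jacobi-Trudi determinant T_{μ/η}(λ) = det_{1≤j,k≤μ'_1}( T^{(1)}_{μ_j−η_k−j+k}(λ q^{−(μ'_1−μ_1+μ_j+η_k−j−k+1)/2}) ). For the hook diagrams μ' = (ℓ+1,1,...,1) of height k and μ'' = (ℓ,1,...,1) of height k+1, the identity T_{μ'}(λ) + T_{μ''}(λ) = T^{(k)}_1(λ q^{ℓ/2}) · T^{(1)}_ℓ(λ q^{−k/2}) holds, where T^{(k)}_1 is given by the dual Jacobi-Trudi determinant det( T^{(1)}_{1−i+j}(λ q^{(i+j−k−1)/2}) )_{1≤i,j≤k}. -/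
/-- The quantum Jacobi-Trudi determinant `T_μ(λ)` for the hook Young diagram
`μ = (p,1,…,1)` of height `h`, built from `T^{(1)}` (paper eq. (qJTsym) with `η = ∅`). -/
noncomputable def hookDet (TL : ℤ → ℂ → ℂ) (s : ℂ) (p : ℤ) (h : ℕ) (lam : ℂ) : ℂ :=
  Matrix.det (Matrix.of fun j k : Fin h =>
    TL ((if (j : ℕ) = 0 then p else 1) - (j : ℤ) + (k : ℤ))
      (lam * s ^ (-((h : ℤ) - p + (if (j : ℕ) = 0 then p else 1) - (j : ℤ) - (k : ℤ) - 1))))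

lemma TL_congr (TL : ℤ → ℂ → ℂ) (a b : ℤ) (lam s : ℂ) (A B : ℤ)
    (h1 : a = b) (h2 : A = B) : TL a (lam * s ^ A) = TL b (lam * s ^ B) := by rw [h1, h2]

/-- hook expansion identity
`T_{μ'}(λ) + T_{μ''}(λ) = T^{(k)}_1(λ q^{ℓ/2}) · T^{(1)}_ℓ(λ q^{−k/2})`,
where `μ' = (ℓ+1,1,…,1)` has height `k`, `μ'' = (ℓ,1,…,1)` has height `k+1`, and
`T^{(k)}_1` is the dual Jacobi-Trudi determinant. -/
theorem stmt3 (s : ℂ) (hs : s ≠ 0)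
    (TL : ℤ → ℂ → ℂ)
    (hTL0 : ∀ lam, TL 0 lam = 1)
    (hTLneg : ∀ l : ℤ, l < 0 → ∀ lam, TL l lam = 0)
    (l k : ℕ) (hl : 1 ≤ l) (hk : 1 ≤ k) (lam : ℂ) :
    hookDet TL s ((l : ℤ) + 1) k lam + hookDet TL s (l : ℤ) (k + 1) lam =
      Matrix.det (Matrix.of fun i j : Fin k =>
          TL (1 - (i : ℤ) + (j : ℤ))
            ((lam * s ^ (l : ℤ)) * s ^ ((i : ℤ) + (j : ℤ) + 1 - (k : ℤ)))) *
        TL (l : ℤ) (lam * s ^ (-(k : ℤ))) := by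
  obtain ⟨m, rfl⟩ : ∃ m, k = m + 1 := ⟨k - 1, by omega⟩
  set N : Matrix (Fin (m + 2)) (Fin (m + 2)) ℂ := Matrix.of (fun j k' : Fin (m + 2) =>
    TL ((if (j : ℕ) = 0 then (l : ℤ) else 1) - (j : ℤ) + (k' : ℤ))
      (lam * s ^ (-((((m + 1 + 1 : ℕ)) : ℤ) - (l : ℤ) + (if (j : ℕ) = 0 then (l : ℤ) else 1) -
        (j : ℤ) - (k' : ℤ) - 1)))) with hN
  have h2 : hookDet TL s (l : ℤ) (m + 1 + 1) lam = N.det := rfl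
  rw [h2, Matrix.det_succ_column_zero N, Fin.sum_univ_succ, Fin.sum_univ_succ]
  have htail : ∀ i : Fin m,
      (-1 : ℂ) ^ ((i.succ.succ : Fin (m+2)) : ℕ) * N i.succ.succ 0 *
        (N.submatrix i.succ.succ.succAbove Fin.succ).det = 0 := by
    intro i
    have : N i.succ.succ 0 = 0 := by
      show TL _ _ = 0
      rw [if_neg (by simp [Fin.val_succ])]
      apply hTLneg
      push_cast [Fin.val_succ, Fin.val_zero]
      omega
    rw [this]; ring
  rw [Finset.sum_congr rfl (fun i _ => htail i), Finset.sum_const_zero]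
  -- N 0 0
  have h00 : N 0 0 = TL (l : ℤ) (lam * s ^ (-((m:ℤ) + 1))) := by
    show TL _ _ = _
    simp only [Fin.val_zero, if_pos rfl]
    congr 2
    push_cast
    ring
  -- N 1 0
  have h10 : N (Fin.succ 0) 0 = 1 := by
    show TL _ _ = _
    rw [if_neg (by simp [Fin.val_succ])]
    have e1 : (1:ℤ) - ((Fin.succ 0 : Fin (m+2)) : ℤ) + ((0 : Fin (m+2)) : ℤ) = 0 := by
      push_cast [Fin.val_succ, Fin.val_zero]; try ring
    rw [e1, hTL0]
  -- minor at 0 = D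
  have hminor0 : (N.submatrix (Fin.succAbove 0) Fin.succ).det =
      Matrix.det (Matrix.of fun i j : Fin (m+1) =>
          TL (1 - (i : ℤ) + (j : ℤ))
            ((lam * s ^ (l : ℤ)) * s ^ ((i : ℤ) + (j : ℤ) + 1 - ((m+1 : ℕ) : ℤ)))) := by
    congr 1
    ext i j
    rw [Matrix.submatrix_apply, Fin.succAbove_zero]
    show TL _ _ = TL _ _
    rw [if_neg (by simp [Fin.val_succ])]
    have e1 : (1 : ℤ) - ((i.succ : Fin (m+2)) : ℤ) + ((j.succ : Fin (m+2)) : ℤ)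
        = 1 - (i : ℤ) + (j : ℤ) := by push_cast [Fin.val_succ, Fin.val_zero]; ring
    rw [e1]
    congr 1
    rw [mul_assoc, ← zpow_add₀ hs]
    congr 1
    push_cast [Fin.val_succ, Fin.val_zero]
    ring
  -- minor at 1 = M
  have hminor1 : (N.submatrix (Fin.succAbove (Fin.succ 0)) Fin.succ).det =
      hookDet TL s ((l : ℤ) + 1) (m + 1) lam := by
    rw [hookDet]
    congr 1
    ext i j
    rw [Matrix.submatrix_apply]
    induction i using Fin.cases with
    | zero =>
      rw [Fin.succ_succAbove_zero]
      show TL _ _ = TL _ _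
      simp only [Fin.val_zero, if_pos rfl, if_true]
      exact TL_congr TL _ _ _ _ _ _ (by push_cast [Fin.val_succ, Fin.val_zero]; ring)
        (by push_cast [Fin.val_succ, Fin.val_zero]; ring)
    | succ i =>
      rw [Fin.succ_succAbove_succ, Fin.succAbove_zero]
      show TL _ _ = TL _ _
      rw [if_neg (by simp [Fin.val_succ]), if_neg (by simp [Fin.val_succ])]
      have e1 : (1:ℤ) - ((i.succ.succ : Fin (m+2)) : ℤ) + ((j.succ : Fin (m+2)) : ℤ)
          = 1 - ((i.succ : Fin (m+1)) : ℤ) + (j : ℤ) := by push_cast [Fin.val_succ, Fin.val_zero]; ring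
      rw [e1]
      congr 2
      push_cast [Fin.val_succ, Fin.val_zero]
      ring
  rw [h00, h10, hminor0, hminor1]
  simp only [Fin.val_zero, Fin.val_succ, pow_zero, pow_one]
  push_cast
  ring
end

section
/- Let T^{(1)}_ℓ(λ) := S^{(ℓ)}_{1,1}(λ q^{−(ℓ−1)/2}) and T^{(a)}_1(λ) := (−1)^{a+1} τ^{(a)}(λ q^{−(a−1)/2}), where S^{(ℓ)} is the ordered product of Stokes matrices as above. Then T^{(1)}_{ℓ+1}(λ) equals the quantum Jacobi-Trudi determinant det( T^{(1−i+j)}_1(λ q^{(ℓ+2−i−j)/2}) )_{1≤i,j≤ℓ+1}, with T^{(0)}_1 = 1 and T^{(a)}_1 = 0 for a < 0 or a ≥ n+2. -/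
/-- The Stokes matrix `S^{(1)}(λ)` of the paper (eq. (sk0form)). -/
noncomputable def stokesMat (n : ℕ) (τ : ℤ → ℂ → ℂ) (lam : ℂ) :
    Matrix (Fin (n + 1)) (Fin (n + 1)) ℂ :=
  Matrix.of fun i j =>
    if (j : ℕ) = 0 then τ ((i : ℕ) + 1 : ℤ) lam
    else if (j : ℕ) = (i : ℕ) + 1 then 1 else 0

/-- `S^{(ℓ)}(λ) = S^{(1)}(λq^{ℓ-1}) ⋯ S^{(1)}(λ)`. -/
noncomputable def Sprod (n : ℕ) (τ : ℤ → ℂ → ℂ) (q : ℂ) :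
    ℕ → ℂ → Matrix (Fin (n + 1)) (Fin (n + 1)) ℂ
  | 0, _ => 1
  | l + 1, lam => stokesMat n τ (lam * q ^ l) * Sprod n τ q l lam


/-! Let `det_{a,ℓ}` be the determinant of the `(ℓ+1) × (ℓ+1)` Jacobi–Trudi matrix with first
row `T^{(a)}, T^{(a+1)}, …` instead of `T^{(1)}, T^{(2)}, …`. Its first column is
`(T^{(a)}, T^{(0)} = 1, 0, …, 0)`, so expanding along it gives the three-term recursion
`det_{a,ℓ+1} = T^{(a)} det_{1,ℓ} - det_{a+1,ℓ}`, with the spectral parameter shifted by `q^{-1/2}`.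
The first column of `S^{(ℓ+1)} = S^{(1)}(λ q^ℓ) S^{(ℓ)}` obeys the same recursion: by the shape of
the Stokes matrix, its entry `a` is `τ^{(a)}` times entry `1` of the first column of `S^{(ℓ)}`,
plus entry `a + 1`. Induction on `ℓ` therefore gives `det_{a,ℓ} = (-1)^{a+1} S^{(ℓ+1)}_{a,1}` for
`1 ≤ a ≤ n + 1`, and `a = 1` is the theorem. -/

theorem Matrix.det_succ_succ_of_column_zero_eq_zero {R : Type*} [CommRing R] {l : ℕ}
    (A : Matrix (Fin (l + 2)) (Fin (l + 2)) R) (hA : ∀ i : Fin l, A i.succ.succ 0 = 0) :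
    A.det = A 0 0 * (A.submatrix Fin.succ Fin.succ).det
      - A 1 0 * (A.submatrix (Fin.succAbove 1) Fin.succ).det := by
  rw [Matrix.det_succ_column_zero, Fin.sum_univ_succ, Fin.sum_univ_succ,
    Finset.sum_eq_zero fun i _ => by rw [hA i, mul_zero, zero_mul]]
  simp only [Fin.val_zero, Fin.succAbove_zero, Fin.succ_zero_eq_one, Fin.val_one]
  ring

section JacobiTrudi

variable {K : Type*} [Field K] (T : ℤ → K → K) (s : K)

def jacobiTrudiOffset (a : ℤ) (i : ℕ) : ℤ := if i = 0 then a else 1 - i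

def jacobiTrudiMat (a : ℤ) (l : ℕ) (lam : K) : Matrix (Fin (l + 1)) (Fin (l + 1)) K :=
  Matrix.of fun i j =>
    T (jacobiTrudiOffset a i + j) (lam * s ^ ((l : ℤ) + jacobiTrudiOffset a i - 1 - j))

variable {T s}

theorem jacobiTrudiMat_one_apply (l : ℕ) (lam : K) (i j : Fin (l + 1)) :
    jacobiTrudiMat T s 1 l lam i j = T (1 - i + j) (lam * s ^ ((l : ℤ) - i - j)) := by
  have : jacobiTrudiOffset 1 i = 1 - i := by unfold jacobiTrudiOffset; split_ifs <;> omega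
  simp only [jacobiTrudiMat, Matrix.of_apply, this]
  ring_nf

theorem det_jacobiTrudiMat_zero (a : ℤ) (lam : K) :
    (jacobiTrudiMat T s a 0 lam).det = T a (lam * s ^ (a - 1)) := by
  simp [jacobiTrudiMat, jacobiTrudiOffset]

theorem det_jacobiTrudiMat_eq_zero {N a : ℤ} (hT : ∀ k, N ≤ k → ∀ x, T k x = 0) (ha : N ≤ a)
    (l : ℕ) (lam : K) : (jacobiTrudiMat T s a l lam).det = 0 :=
  Matrix.det_eq_zero_of_row_eq_zero 0 fun j => hT _ (by simp [jacobiTrudiOffset]; omega) _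

variable (hs : s ≠ 0)
include hs

theorem jacobiTrudiMat_submatrix_succ_succ (a : ℤ) (l : ℕ) (lam : K) :
    (jacobiTrudiMat T s a (l + 1) lam).submatrix Fin.succ Fin.succ
      = jacobiTrudiMat T s 1 l (lam * s⁻¹) := by
  ext i j
  have : jacobiTrudiOffset a ((i : ℕ) + 1) = jacobiTrudiOffset 1 i - 1 := by
    simp only [jacobiTrudiOffset, Nat.add_one_ne_zero, if_false]
    split_ifs <;> push_cast <;> omega
  simp only [jacobiTrudiMat, Matrix.submatrix_apply, Matrix.of_apply, Fin.val_succ, this,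
    mul_assoc, ← zpow_neg_one, ← zpow_add₀ hs]
  push_cast
  ring_nf

theorem jacobiTrudiMat_submatrix_succAbove_one_succ (a : ℤ) (l : ℕ) (lam : K) :
    (jacobiTrudiMat T s a (l + 1) lam).submatrix (Fin.succAbove 1) Fin.succ
      = jacobiTrudiMat T s (a + 1) l (lam * s⁻¹) := by
  ext i j
  have : jacobiTrudiOffset a ((1 : Fin (l + 2)).succAbove i)
      = jacobiTrudiOffset (a + 1) i - 1 := by
    cases i using Fin.cases <;> simp [jacobiTrudiOffset, Fin.succAbove]; omega
  simp only [jacobiTrudiMat, Matrix.submatrix_apply, Matrix.of_apply, Fin.val_succ, this,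
    mul_assoc, ← zpow_neg_one, ← zpow_add₀ hs]
  push_cast
  ring_nf

theorem det_jacobiTrudiMat_succ (hT0 : ∀ x, T 0 x = 1) (hTneg : ∀ k < 0, ∀ x, T k x = 0)
    (a : ℤ) (l : ℕ) (lam : K) :
    (jacobiTrudiMat T s a (l + 1) lam).det
      = T a (lam * s ^ ((l : ℤ) + a)) * (jacobiTrudiMat T s 1 l (lam * s⁻¹)).det
        - (jacobiTrudiMat T s (a + 1) l (lam * s⁻¹)).det := by
  have h00 : jacobiTrudiMat T s a (l + 1) lam 0 0 = T a (lam * s ^ ((l : ℤ) + a)) := by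
    simp [jacobiTrudiMat, jacobiTrudiOffset, add_sub_right_comm]
  have h10 : jacobiTrudiMat T s a (l + 1) lam 1 0 = 1 := by
    simp [jacobiTrudiMat, jacobiTrudiOffset, hT0]
  have hcol : ∀ i : Fin l, jacobiTrudiMat T s a (l + 1) lam i.succ.succ 0 = 0 :=
    fun i => hTneg _ (by simp [jacobiTrudiOffset]; omega) _
  rw [Matrix.det_succ_succ_of_column_zero_eq_zero _ hcol, h00, h10, one_mul,
    jacobiTrudiMat_submatrix_succ_succ hs, jacobiTrudiMat_submatrix_succAbove_one_succ hs]

end JacobiTrudi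

section Stokes

variable {n : ℕ} {τ : ℤ → ℂ → ℂ} {μ : ℂ}

theorem stokesMat_apply_zero (i : Fin (n + 1)) : stokesMat n τ μ i 0 = τ ((i : ℕ) + 1) μ := by
  simp [stokesMat]

theorem stokesMat_apply_succ (i : Fin (n + 1)) (k : Fin n) :
    stokesMat n τ μ i k.succ = if (k : ℕ) = i then 1 else 0 := by
  simp [stokesMat]

theorem stokesMat_mul_apply_castSucc (M : Matrix (Fin (n + 1)) (Fin (n + 1)) ℂ) (i : Fin n)
    (j : Fin (n + 1)) :
    (stokesMat n τ μ * M) i.castSucc j = τ ((i : ℕ) + 1) μ * M 0 j + M i.succ j := by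
  simp [Matrix.mul_apply, Fin.sum_univ_succ, stokesMat_apply_zero, stokesMat_apply_succ,
    Fin.val_eq_val]

theorem stokesMat_mul_apply_last (M : Matrix (Fin (n + 1)) (Fin (n + 1)) ℂ) (j : Fin (n + 1)) :
    (stokesMat n τ μ * M) (Fin.last n) j = τ ((n : ℤ) + 1) μ * M 0 j := by
  simp [Matrix.mul_apply, Fin.sum_univ_succ, stokesMat_apply_zero, stokesMat_apply_succ,
    fun k : Fin n => k.isLt.ne]

end Stokes

theorem Sprod_succ (n : ℕ) (τ : ℤ → ℂ → ℂ) (q : ℂ) (l : ℕ) (lam : ℂ) :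
    Sprod n τ q (l + 1) lam = stokesMat n τ (lam * q ^ l) * Sprod n τ q l lam := rfl

section JacobiTrudiStokes

variable {n : ℕ} {τ T : ℤ → ℂ → ℂ} {s : ℂ}

theorem det_jacobiTrudiMat_eq_Sprod_apply (hs : s ≠ 0)
    (hT : ∀ r : Fin (n + 1), ∀ x, T ((r : ℕ) + 1) (x * s ^ ((r : ℕ) : ℤ))
      = (-1) ^ (r : ℕ) * τ ((r : ℕ) + 1) x)
    (hT0 : ∀ x, T 0 x = 1) (hTneg : ∀ k < 0, ∀ x, T k x = 0)
    (hTtop : ∀ k, (n : ℤ) + 2 ≤ k → ∀ x, T k x = 0) (l : ℕ) (r : Fin (n + 1)) (lam : ℂ) :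
    (jacobiTrudiMat T s ((r : ℕ) + 1) l lam).det
      = (-1) ^ (r : ℕ) * Sprod n τ (s ^ 2) (l + 1) (lam * s ^ (-(l : ℤ))) r 0 := by
  induction l generalizing r lam with
  | zero =>
    rw [det_jacobiTrudiMat_zero, add_sub_cancel_right, hT, Sprod_succ, Sprod, Matrix.mul_one,
      stokesMat_apply_zero]
    simp
  | succ l ih =>
    have hμ : lam * s⁻¹ * s ^ (-(l : ℤ)) = lam * s ^ (-((l + 1 : ℕ) : ℤ)) := by
      rw [mul_assoc, ← zpow_neg_one, ← zpow_add₀ hs]; push_cast; ring_nf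
    have hν : lam * s ^ (-((l + 1 : ℕ) : ℤ)) * (s ^ 2) ^ (l + 1) = lam * s ^ ((l : ℤ) + 1) := by
      rw [← pow_mul, ← zpow_natCast, mul_assoc, ← zpow_add₀ hs]; push_cast; ring_nf
    have h1 : (jacobiTrudiMat T s 1 l (lam * s⁻¹)).det
        = Sprod n τ (s ^ 2) (l + 1) (lam * s ^ (-((l + 1 : ℕ) : ℤ))) 0 0 := by
      rw [← hμ]
      simpa using ih 0 (lam * s⁻¹)
    have hTr : T ((r : ℕ) + 1 : ℤ) (lam * s ^ ((l : ℤ) + ((r : ℕ) + 1)))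
        = (-1) ^ (r : ℕ) * τ ((r : ℕ) + 1) (lam * s ^ ((l : ℤ) + 1)) := by
      rw [← hT, mul_assoc, ← zpow_add₀ hs]; ring_nf
    rw [det_jacobiTrudiMat_succ hs hT0 hTneg, hTr, h1, Sprod_succ _ _ _ (l + 1), hν]
    induction r using Fin.lastCases with
    | last =>
      rw [det_jacobiTrudiMat_eq_zero hTtop (by simp; omega), stokesMat_mul_apply_last,
        Fin.val_last, sub_zero, mul_assoc]
    | cast i =>
      rw [show ((i.castSucc : ℕ) : ℤ) + 1 + 1 = ((i.succ : ℕ) : ℤ) + 1 by simp, ih, hμ,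
        stokesMat_mul_apply_castSucc, Fin.val_castSucc, Fin.val_succ, pow_succ]
      ring

end JacobiTrudiStokes

theorem stmt10_general (n : ℕ) (τ : ℤ → ℂ → ℂ) (s : ℂ) (hs : s ≠ 0)
    (TL Ta1 : ℤ → ℂ → ℂ)
    (hTL : ∀ (l : ℕ) (lam : ℂ),
      TL (l : ℤ) lam = Sprod n τ (s ^ 2) l (lam * s ^ (-((l : ℤ) - 1))) 0 0)
    (hTa1 : ∀ a : ℕ, 1 ≤ a → a ≤ n + 1 → ∀ lam : ℂ,
      Ta1 (a : ℤ) lam = (-1 : ℂ) ^ (a + 1) * τ (a : ℤ) (lam * s ^ (-((a : ℤ) - 1))))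
    (hTa10 : ∀ lam, Ta1 0 lam = 1)
    (hTa1z : ∀ a : ℤ, (a < 0 ∨ (n : ℤ) + 2 ≤ a) → ∀ lam, Ta1 a lam = 0) :
    ∀ (l : ℕ) (lam : ℂ),
      TL ((l : ℤ) + 1) lam =
        Matrix.det (Matrix.of fun i j : Fin (l + 1) =>
          Ta1 (1 - (i : ℤ) + (j : ℤ)) (lam * s ^ ((l : ℤ) - (i : ℤ) - (j : ℤ)))) := by
  intro l lam
  have hT : ∀ r : Fin (n + 1), ∀ x, Ta1 ((r : ℕ) + 1) (x * s ^ ((r : ℕ) : ℤ))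
      = (-1) ^ (r : ℕ) * τ ((r : ℕ) + 1) x := by
    intro r x
    have h := hTa1 (r + 1) (by omega) (by omega) (x * s ^ ((r : ℕ) : ℤ))
    push_cast at h
    rw [h, mul_assoc, ← zpow_add₀ hs, pow_succ, pow_succ]
    simp
  calc TL ((l : ℤ) + 1) lam = Sprod n τ (s ^ 2) (l + 1) (lam * s ^ (-(l : ℤ))) 0 0 := by
        simpa using hTL (l + 1) lam
    _ = (jacobiTrudiMat Ta1 s 1 l lam).det := by
        simpa using (det_jacobiTrudiMat_eq_Sprod_apply hs hT hTa10
          (fun k hk => hTa1z k (.inl hk)) (fun k hk => hTa1z k (.inr hk)) l 0 lam).symm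
    _ = _ := congrArg Matrix.det (Matrix.ext fun i j => jacobiTrudiMat_one_apply l lam i j)

/-- the main identity (paper eq. (qJT1)).  With
`T^{(1)}_ℓ(λ) := S^{(ℓ)}_{1,1}(λ q^{−(ℓ−1)/2})` and
`T^{(a)}_1(λ) := (−1)^{a+1} τ^{(a)}(λ q^{−(a−1)/2})` (where `s = q^{1/2}`, `q = s²`),
`T^{(1)}_{ℓ+1}` equals the quantum Jacobi-Trudi determinant in the `T^{(a)}_1`. -/
theorem stmt10 (n : ℕ) (τ : ℤ → ℂ → ℂ) (s : ℂ) (hs : s ≠ 0)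
    (TL Ta1 : ℤ → ℂ → ℂ)
    (hTL : ∀ (l : ℕ) (lam : ℂ),
      TL (l : ℤ) lam = Sprod n τ (s ^ 2) l (lam * s ^ (-((l : ℤ) - 1))) 0 0)
    (hTLneg : ∀ l : ℤ, l < 0 → ∀ lam, TL l lam = 0)
    (hTa1 : ∀ a : ℕ, 1 ≤ a → a ≤ n + 1 → ∀ lam : ℂ,
      Ta1 (a : ℤ) lam = (-1 : ℂ) ^ (a + 1) * τ (a : ℤ) (lam * s ^ (-((a : ℤ) - 1))))
    (hTa10 : ∀ lam, Ta1 0 lam = 1)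
    (hTa1z : ∀ a : ℤ, (a < 0 ∨ (n : ℤ) + 2 ≤ a) → ∀ lam, Ta1 a lam = 0) :
    ∀ (l : ℕ) (lam : ℂ),
      TL ((l : ℤ) + 1) lam =
        Matrix.det (Matrix.of fun i j : Fin (l + 1) =>
          Ta1 (1 - (i : ℤ) + (j : ℤ)) (lam * s ^ ((l : ℤ) - (i : ℤ) - (j : ℤ)))) :=
  stmt10_general n τ s hs TL Ta1 hTL hTa1 hTa10 hTa1z
end

section
/- With S^{(ℓ)}(λ) the ordered product of Stokes matrices and T_μ the quantum Jacobi-Trudi determinant built from T^{(1)}_ℓ, the general first-column entries are given by S^{(ℓ)}_{k,1}(λ) = (−1)^{k+1} T_μ(q^{(ℓ+k−2)/2} λ), where μ is the hook-shaped Young diagram (ℓ,1,…,1) of height k. -/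
lemma sprod_entry (n : ℕ) (τ : ℤ → ℂ → ℂ) (q : ℂ) (l : ℕ) (lam : ℂ) (i : Fin (n+1)) :
    Sprod n τ q (l+1) lam i 0 =
      τ ((i:ℕ) + 1 : ℤ) (lam * q ^ l) * Sprod n τ q l lam 0 0 +
        (if h : (i:ℕ) < n then Sprod n τ q l lam ⟨(i:ℕ)+1, by omega⟩ 0 else 0) := by
  show (stokesMat n τ (lam * q ^ l) * Sprod n τ q l lam) i 0 = _
  rw [Matrix.mul_apply]
  have hsplit : ∀ j : Fin (n+1), stokesMat n τ (lam * q ^ l) i j * Sprod n τ q l lam j 0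
      = (if j = 0 then τ ((i:ℕ)+1 : ℤ) (lam * q ^ l) * Sprod n τ q l lam 0 0 else 0)
        + (if h : (i:ℕ) < n then (if j = ⟨(i:ℕ)+1, by omega⟩ then Sprod n τ q l lam ⟨(i:ℕ)+1, by omega⟩ 0 else 0) else 0) := by
    intro j
    simp only [stokesMat, Matrix.of_apply]
    by_cases hj0 : j = 0
    · subst hj0
      rw [if_pos (show ((0:Fin (n+1)) : ℕ) = 0 from rfl), if_pos rfl]
      have hz : (if h : (i:ℕ) < n then (if (0:Fin (n+1)) = (⟨(i:ℕ)+1, by omega⟩ : Fin (n+1)) then Sprod n τ q l lam ⟨(i:ℕ)+1, by omega⟩ 0 else 0) else 0) = 0 := by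
        split_ifs with h h2
        · have := congrArg Fin.val h2
          simp at this
        · rfl
        · rfl
      rw [hz]; ring
    · rw [if_neg hj0]
      have hj0' : (j : ℕ) ≠ 0 := fun hc => hj0 (Fin.ext hc)
      rw [if_neg hj0']
      by_cases hje : (j:ℕ) = (i:ℕ) + 1
      · have hi : (i:ℕ) < n := by omega
        rw [if_pos hje, dif_pos hi, if_pos (Fin.ext hje), one_mul]
        have : j = (⟨(i:ℕ)+1, by omega⟩ : Fin (n+1)) := Fin.ext hje
        rw [this, zero_add]
      · rw [if_neg hje, zero_mul, zero_add]
        split_ifs with h h2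
        · exact absurd (congrArg Fin.val h2) hje
        · rfl
        · rfl
  rw [Finset.sum_congr rfl (fun j _ => hsplit j), Finset.sum_add_distrib]
  congr 1
  · rw [Finset.sum_ite_eq' Finset.univ (0 : Fin (n+1))]
    simp
  · split_ifs with h
    · rw [Finset.sum_ite_eq' Finset.univ]
      simp
    · simp

lemma hook_one (TL : ℤ → ℂ → ℂ) (s : ℂ) (p : ℤ) (lam : ℂ) :
    hookDet TL s p 1 lam = TL p lam := by
  rw [hookDet, Matrix.det_fin_one]
  norm_num

lemma hook_expand (TL : ℤ → ℂ → ℂ) (s : ℂ) (hs : s ≠ 0)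
    (hTL0 : ∀ lam, TL 0 lam = 1)
    (hTLneg : ∀ l : ℤ, l < 0 → ∀ lam, TL l lam = 0)
    (p : ℤ) (m : ℕ) (lam : ℂ) :
    hookDet TL s p (m+2) lam =
      TL p (lam * s ^ (-((m:ℤ)+1))) * hookDet TL s 1 (m+1) (lam * s ^ p)
        - hookDet TL s (p+1) (m+1) lam := by
  rw [hookDet, Matrix.det_succ_column_zero, Fin.sum_univ_succ, Fin.sum_univ_succ]
  rw [Finset.sum_eq_zero (fun i _ => ?tail), add_zero]
  case tail =>
    have hz : (Matrix.of fun j k : Fin (m+2) =>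
        TL ((if (j : ℕ) = 0 then p else 1) - (j : ℤ) + (k : ℤ))
          (lam * s ^ (-(((m+2 : ℕ) : ℤ) - p + (if (j : ℕ) = 0 then p else 1) - (j : ℤ) - (k : ℤ) - 1))))
        i.succ.succ 0 = 0 := by
      simp only [Matrix.of_apply, Fin.val_succ, Fin.val_zero]
      rw [if_neg (by omega)]
      apply hTLneg
      push_cast
      omega
    rw [hz]
    ring
  have h00 : (Matrix.of fun j k : Fin (m+2) =>
      TL ((if (j : ℕ) = 0 then p else 1) - (j : ℤ) + (k : ℤ))
        (lam * s ^ (-(((m+2 : ℕ) : ℤ) - p + (if (j : ℕ) = 0 then p else 1) - (j : ℤ) - (k : ℤ) - 1))))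
      0 0 = TL p (lam * s ^ (-((m:ℤ)+1))) := by
    simp only [Matrix.of_apply, Fin.val_zero, reduceIte]
    congr 1
    · push_cast; ring
    · congr 1
      push_cast; ring
  have h10 : (Matrix.of fun j k : Fin (m+2) =>
      TL ((if (j : ℕ) = 0 then p else 1) - (j : ℤ) + (k : ℤ))
        (lam * s ^ (-(((m+2 : ℕ) : ℤ) - p + (if (j : ℕ) = 0 then p else 1) - (j : ℤ) - (k : ℤ) - 1))))
      (Fin.succ 0) 0 = 1 := by
    simp only [Matrix.of_apply]
    rw [if_neg (show ¬(((Fin.succ (0:Fin (m+1)) : Fin (m+2)) : ℕ) = 0) by simp)]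
    rw [show (1:ℤ) - (((Fin.succ (0:Fin (m+1)) : Fin (m+2)) : ℕ) : ℤ)
        + ((((0 : Fin (m+2)) : ℕ)) : ℤ) = 0 by push_cast; simp]
    exact hTL0 _
  have hsub0 : ((Matrix.of fun j k : Fin (m+2) =>
      TL ((if (j : ℕ) = 0 then p else 1) - (j : ℤ) + (k : ℤ))
        (lam * s ^ (-(((m+2 : ℕ) : ℤ) - p + (if (j : ℕ) = 0 then p else 1) - (j : ℤ) - (k : ℤ) - 1)))).submatrix
        (Fin.succAbove 0) Fin.succ).det = hookDet TL s 1 (m+1) (lam * s ^ p) := by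
    rw [hookDet]
    congr 1
    ext j k
    simp only [Matrix.submatrix_apply, Fin.succAbove_zero, Matrix.of_apply, Fin.val_succ, ite_self]
    rw [if_neg (by omega)]
    congr 1
    · push_cast; ring
    · rw [mul_assoc, ← zpow_add₀ hs]
      congr 1
      push_cast; ring
  have hsub1 : ((Matrix.of fun j k : Fin (m+2) =>
      TL ((if (j : ℕ) = 0 then p else 1) - (j : ℤ) + (k : ℤ))
        (lam * s ^ (-(((m+2 : ℕ) : ℤ) - p + (if (j : ℕ) = 0 then p else 1) - (j : ℤ) - (k : ℤ) - 1)))).submatrix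
        (Fin.succ 0).succAbove Fin.succ).det = hookDet TL s (p+1) (m+1) lam := by
    rw [hookDet]
    congr 1
    ext j k
    simp only [Matrix.submatrix_apply]
    refine Fin.cases ?_ ?_ j
    · rw [Fin.succ_succAbove_zero]
      simp only [Matrix.of_apply, Fin.val_zero, reduceIte]
      congr 1
      · push_cast [Fin.val_succ]; ring
      · congr 1
        push_cast [Fin.val_succ]; ring
    · intro j'
      rw [Fin.succ_succAbove_succ, Fin.succAbove_zero]
      simp only [Matrix.of_apply, Fin.val_succ]
      rw [if_neg (by omega), if_neg (by omega)]
      congr 1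
      · push_cast [Fin.val_succ]; ring
      · congr 1
        push_cast [Fin.val_succ]; ring
  rw [h00, h10, hsub0, hsub1]
  simp only [Fin.val_zero, pow_zero, Fin.val_succ, Fin.val_zero, zero_add, pow_one, one_mul]
  ring

/-- paper Theorem, eq. (skew): the first-column entries of the generalized
Stokes matrices are hook Jacobi-Trudi determinants:
`S^{(ℓ)}_{k,1}(λ) = (−1)^{k+1} T_μ(q^{(ℓ+k−2)/2} λ)` for the hook `μ = (ℓ,1,…,1)` of
height `k` (here `k = k₀ + 1` with `k₀ : Fin (n+1)` zero-based, and `s = q^{1/2}`). -/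
theorem stmt11 (n : ℕ) (τ : ℤ → ℂ → ℂ) (s : ℂ) (hs : s ≠ 0)
    (TL : ℤ → ℂ → ℂ)
    (hTL : ∀ (l : ℕ) (lam : ℂ),
      TL (l : ℤ) lam = Sprod n τ (s ^ 2) l (lam * s ^ (-((l : ℤ) - 1))) 0 0)
    (hTLneg : ∀ l : ℤ, l < 0 → ∀ lam, TL l lam = 0) :
    ∀ (l : ℕ), 1 ≤ l → ∀ (k : Fin (n + 1)) (lam : ℂ),
      Sprod n τ (s ^ 2) l lam k 0 =
        (-1 : ℂ) ^ (k : ℕ) *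
          hookDet TL s (l : ℤ) ((k : ℕ) + 1)
            (lam * s ^ ((l : ℤ) + (k : ℤ) - 1)) := by
  have hTL0 : ∀ lam, TL 0 lam = 1 := by
    intro lam
    have h := hTL 0 lam
    simpa [Sprod, Matrix.one_apply] using h
  have hcancel : ∀ (lam : ℂ) (a : ℤ), (lam * s ^ a) * s ^ (-a) = lam := by
    intro lam a
    rw [mul_assoc, ← zpow_add₀ hs]
    simp
  have key : ∀ (k0 : ℕ) (hk : k0 < n + 1), ∀ (l : ℕ), 1 ≤ l → ∀ lam : ℂ,
      Sprod n τ (s ^ 2) l lam ⟨k0, hk⟩ 0 =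
        (-1 : ℂ) ^ k0 * hookDet TL s (l : ℤ) (k0 + 1)
          (lam * s ^ ((l : ℤ) + (k0 : ℤ) - 1)) := by
    intro k0
    induction k0 with
    | zero =>
      intro hk l hl lam
      have e0 : (⟨0, hk⟩ : Fin (n+1)) = 0 := Fin.ext (by simp)
      rw [e0, pow_zero, one_mul]
      rw [show ((0:ℕ):ℤ) = 0 by simp, add_zero, zero_add, hook_one, hTL l, hcancel]
    | succ k0 ih =>
      intro hk l hl lam
      have hk0n : k0 < n := by omega
      have hk0 : k0 < n + 1 := by omega
      -- recursion for the Stokes product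
      have hrec := sprod_entry n τ (s^2) l lam ⟨k0, hk0⟩
      rw [dif_pos (show ((⟨k0, hk0⟩ : Fin (n+1)) : ℕ) < n from hk0n)] at hrec
      -- expand the hook determinant
      rw [show k0 + 1 + 1 = k0 + 2 by omega, hook_expand TL s hs hTL0 hTLneg]
      -- (a) the TL factor is Sprod l lam 0 0
      have ha : TL (l:ℤ) ((lam * s ^ ((l : ℤ) + ((k0+1 : ℕ) : ℤ) - 1)) * s ^ (-((k0:ℤ)+1)))
          = Sprod n τ (s ^ 2) l lam 0 0 := by
        rw [show (lam * s ^ ((l : ℤ) + ((k0+1 : ℕ) : ℤ) - 1)) * s ^ (-((k0:ℤ)+1))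
            = lam * s ^ ((l:ℤ) - 1) by
          rw [mul_assoc, ← zpow_add₀ hs]; congr 1; push_cast; ring]
        rw [hTL l, hcancel]
      -- (b) the height-(k0+1) hook with p = 1
      have hb2 : Sprod n τ (s^2) 1 (lam * s ^ (2 * (l:ℤ))) ⟨k0, hk0⟩ 0
          = τ ((k0:ℤ) + 1) (lam * (s^2) ^ l) := by
        have hh := sprod_entry n τ (s^2) 0 (lam * s ^ (2 * (l:ℤ))) ⟨k0, hk0⟩
        rw [hh]
        have hz : (if h : ((⟨k0, hk0⟩ : Fin (n+1)) : ℕ) < n then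
            Sprod n τ (s^2) 0 (lam * s ^ (2 * (l:ℤ))) ⟨((⟨k0, hk0⟩ : Fin (n+1)) : ℕ)+1, by omega⟩ 0 else 0) = 0 := by
          rw [dif_pos hk0n]
          show (1 : Matrix (Fin (n+1)) (Fin (n+1)) ℂ) _ _ = 0
          rw [Matrix.one_apply_ne (by simp [Fin.ext_iff])]
        rw [hz, add_zero]
        show τ _ _ * (1 : Matrix (Fin (n+1)) (Fin (n+1)) ℂ) 0 0 = _
        rw [Matrix.one_apply_eq, mul_one, pow_zero, mul_one,
            show (2 * (l:ℤ)) = ((2*l : ℕ) : ℤ) by push_cast; ring,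
            zpow_natCast, pow_mul]
      have hb : hookDet TL s 1 (k0+1) ((lam * s ^ ((l : ℤ) + ((k0+1 : ℕ) : ℤ) - 1)) * s ^ (l:ℤ))
          = (-1:ℂ)^k0 * τ ((k0:ℤ) + 1) (lam * (s^2) ^ l) := by
        have hb1 := ih hk0 1 le_rfl (lam * s ^ (2 * (l:ℤ)))
        push_cast at hb1
        have harg : (lam * s ^ ((l : ℤ) + ((k0+1 : ℕ) : ℤ) - 1)) * s ^ (l:ℤ)
            = (lam * s ^ (2 * (l:ℤ))) * s ^ ((1:ℤ) + (k0:ℤ) - 1) := by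
          rw [mul_assoc, mul_assoc, ← zpow_add₀ hs, ← zpow_add₀ hs]
          congr 1
          push_cast; ring
        rw [harg, ← hb2, hb1, ← mul_assoc, ← pow_add, Even.neg_one_pow ⟨k0, rfl⟩, one_mul]
      -- (c) the height-(k0+1) hook with p = l+1
      have hc : hookDet TL s ((l:ℤ)+1) (k0+1) (lam * s ^ ((l : ℤ) + ((k0+1:ℕ):ℤ) - 1))
          = (-1:ℂ)^k0 * Sprod n τ (s^2) (l+1) lam ⟨k0, hk0⟩ 0 := by
        have hih := ih hk0 (l+1) (by omega) lam
        rw [show ((l:ℤ)+1) = ((l+1:ℕ):ℤ) by push_cast; ring,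
            show (l:ℤ) + ((k0+1:ℕ):ℤ) - 1 = ((l+1:ℕ):ℤ) + (k0:ℤ) - 1 by push_cast; ring,
            hih, ← mul_assoc, ← pow_add, Even.neg_one_pow ⟨k0, rfl⟩, one_mul]
      rw [ha, hb, hc]
      have hrec2 : Sprod n τ (s^2) (l+1) lam ⟨k0, hk0⟩ 0 =
          τ ((k0:ℤ) + 1) (lam * (s ^ 2) ^ l) * Sprod n τ (s^2) l lam 0 0 +
            Sprod n τ (s^2) l lam ⟨k0+1, hk⟩ 0 := hrec
      have hsq : ((-1:ℂ))^k0 * (-1:ℂ)^k0 = 1 := by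
        rw [← pow_add]; exact Even.neg_one_pow ⟨k0, rfl⟩
      set S0 := Sprod n τ (s ^ 2) l lam 0 0 with hS0
      set S1 := Sprod n τ (s ^ 2) l lam ⟨k0 + 1, hk⟩ 0 with hS1
      set S2 := Sprod n τ (s ^ 2) (l + 1) lam ⟨k0, hk0⟩ 0 with hS2
      set t0 := τ ((k0:ℤ) + 1) (lam * (s ^ 2) ^ l) with ht0
      linear_combination (t0 * S0 - S2) * hsq - hrec2
  intro l hl k lam
  have := key (k : ℕ) k.isLt l hl lam
  rwa [Fin.eta] at this
end
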